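/- The Diversity Owen value satisfies Equality through diversity: for every TU-game with diversity constraints (N,v,B,d) and all components B_k, B_q of B, Σ_{i∈B_k} DOw_i(N,v,B,d) = Σ_{i∈B_q} DOw_i(N,v,B,d). -/

import Mathlib

open Finset
open scoped Classical


/-- A TU-game with diversity constraints `(N, v, 𝓑, d)` (data only);
the components `B 0, …, B (m-1)` are indexed by `Fin m`. -/
structure DivGame where
  m : ℕ
  N : Finset ℕ
  v : Finset ℕ → ℝ
  B : Fin m → Finset ℕ
  d : Fin m → ℕ

/-- Membership in the class `GD` of TU-games with diversity constraints:
`v ∅ = 0`, `𝓑` is a partition of `N` into components, and `1 ≤ d k ≤ |B k|`. -/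
def IsGD (G : DivGame) : Prop :=
  G.v ∅ = 0 ∧
  (∀ k, G.B k ⊆ G.N) ∧
  (∀ i ∈ G.N, ∃! k, i ∈ G.B k) ∧
  (∀ k, 1 ≤ G.d k ∧ G.d k ≤ (G.B k).card)

/-- `S` is a diverse coalition: `|S ∩ B k| ≥ d k` for every component index `k`. -/
def DiverseCoal (G : DivGame) (S : Finset ℕ) : Prop :=
  ∀ k, G.d k ≤ (S ∩ G.B k).card

/-- The diversity-restricted game `v^d`. -/
noncomputable def restrictedGame (G : DivGame) : Finset ℕ → ℝ :=
  fun S => if DiverseCoal G S then G.v S else 0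

/-- The Owen value of player `i` in the game `v` with coalition structure `B` on `Fin m`. -/
noncomputable def Owen (m : ℕ) (v : Finset ℕ → ℝ) (B : Fin m → Finset ℕ) (i : ℕ) : ℝ :=
  ∑ k ∈ univ.filter (fun k => i ∈ B k),
    ∑ R ∈ ((univ : Finset (Fin m)).erase k).powerset,
      ∑ S ∈ ((B k).erase i).powerset,
        ((R.card.factorial * (m - R.card - 1).factorial : ℝ) / m.factorial) *
          ((S.card.factorial * ((B k).card - S.card - 1).factorial : ℝ) /
            (B k).card.factorial) *
          (v (R.biUnion B ∪ S ∪ {i}) - v (R.biUnion B ∪ S))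

/-- The Diversity Owen value: `DOw (N,v,𝓑,d) = Ow (N, v^d, 𝓑)`. -/
noncomputable def DOw (G : DivGame) : ℕ → ℝ :=
  Owen G.m (restrictedGame G) G.B

/-- The game on the same `(N, 𝓑, d)` with characteristic function `v`. -/
def gameWith (G : DivGame) (v : Finset ℕ → ℝ) : DivGame := { G with v := v }

/-- The induced subgame `(N \ {i}, v|_{N\{i}}, 𝓑|_{N\{i}}, d)` obtained by removing player `i`. -/
def dropPlayer (G : DivGame) (i : ℕ) : DivGame :=
  { G with N := G.N.erase i, B := fun k => (G.B k).erase i }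

/-- Player `i` is null in `v` (on player set `N`): `v (S ∪ {i}) = v S` for all `S ⊆ N \ {i}`. -/
def NullPlayerIn (v : Finset ℕ → ℝ) (N : Finset ℕ) (i : ℕ) : Prop :=
  ∀ S ⊆ N.erase i, v (insert i S) = v S

/-- Players `i` and `j` are symmetric in `v` (on player set `N`). -/
def SymmetricIn (v : Finset ℕ → ℝ) (N : Finset ℕ) (i j : ℕ) : Prop :=
  ∀ S ⊆ N \ {i, j}, v (insert i S) - v S = v (insert j S) - v S

/-- The game is diverse: `v S ≠ 0` implies `S` is a diverse coalition. -/
def IsDiverseGame (G : DivGame) : Prop :=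
  ∀ S ⊆ G.N, G.v S ≠ 0 → DiverseCoal G S

/-- Player `i` is an out player: `i ∈ B k` with `|B k| - d k ≥ 1`. -/
def OutPlayer (G : DivGame) (i : ℕ) : Prop :=
  ∃ k, i ∈ G.B k ∧ G.d k < (G.B k).card

/-- The game is `i`-out diverse: diverse and `i` is an out player. -/
def IOutDiverse (G : DivGame) (i : ℕ) : Prop :=
  IsDiverseGame G ∧ OutPlayer G i

/-- A value on `GD`. -/
abbrev Value := DivGame → ℕ → ℝ

/-- Efficiency (E). -/
def Efficiency (f : Value) : Prop :=
  ∀ G, IsGD G → ∑ i ∈ G.N, f G i = G.v G.N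

/-- Null Player Out for Preserving-Diversity Games (NPOPD). -/
def NPOPD (f : Value) : Prop :=
  ∀ G, IsGD G → ∀ i, IOutDiverse G i → NullPlayerIn G.v G.N i →
    ∀ j ∈ G.N.erase i, f G j = f (dropPlayer G i) j

/-- Fairness within Component (FwC). -/
def FwC (f : Value) : Prop :=
  ∀ G : DivGame, ∀ v w : Finset ℕ → ℝ,
    IsGD (gameWith G v) → IsGD (gameWith G w) →
    ∀ p : Fin G.m, ∀ i ∈ G.B p, ∀ j ∈ G.B p, SymmetricIn v G.N i j →
      f (gameWith G (v + w)) i - f (gameWith G w) i =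
        f (gameWith G (v + w)) j - f (gameWith G w) j

/-- Fairness through Diversity (FD). -/
def FD (f : Value) : Prop :=
  ∀ G : DivGame, ∀ v w : Finset ℕ → ℝ,
    IsGD (gameWith G v) → IsGD (gameWith G w) →
    ∀ p q : Fin G.m,
      (∑ i ∈ G.B p, f (gameWith G (v + w)) i) - (∑ i ∈ G.B p, f (gameWith G w) i) =
        (∑ i ∈ G.B q, f (gameWith G (v + w)) i) - (∑ i ∈ G.B q, f (gameWith G w) i)

/-- Independence from Non-Diverse Coalitions (INDC). -/
def INDC (f : Value) : Prop :=
  ∀ G : DivGame, ∀ v w : Finset ℕ → ℝ,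
    IsGD (gameWith G v) → IsGD (gameWith G w) →
    (∀ S ⊆ G.N, DiverseCoal G S → v S = w S) →
    ∀ i ∈ G.N, f (gameWith G v) i = f (gameWith G w) i

/-- Equality through diversity (ED). -/
def ED (f : Value) : Prop :=
  ∀ G, IsGD G → ∀ k q : Fin G.m, ∑ i ∈ G.B k, f G i = ∑ i ∈ G.B q, f G i

/-- Null Player for Diverse Games (ND). -/
def ND (f : Value) : Prop :=
  ∀ G, IsGD G → IsDiverseGame G → ∀ i ∈ G.N, NullPlayerIn G.v G.N i → f G i = 0

/-- Intra-coalitional balanced contributions with out players for preserving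
diversity (IBCOPPD). -/
def IBCOPPD (f : Value) : Prop :=
  ∀ G, IsGD G → IsDiverseGame G →
    ∀ p : Fin G.m, ∀ i ∈ G.B p, ∀ j ∈ G.B p, i ≠ j → G.d p < (G.B p).card →
      (f G i - f (dropPlayer G j) i = f G j - f (dropPlayer G i) j) ∧
      (NullPlayerIn (dropPlayer G j).v (dropPlayer G j).N i → f (dropPlayer G j) i = 0) ∧
      (NullPlayerIn (dropPlayer G i).v (dropPlayer G i).N j → f (dropPlayer G i) j = 0)

/-- Weak intra-coalitional balanced contributions with out players for preserving
diversity (IBCOPPD⁻). -/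
def IBCOPPDweak (f : Value) : Prop :=
  (∀ G, IsGD G → IsDiverseGame G →
    ∀ p : Fin G.m, ∀ i ∈ G.B p, ∀ j ∈ G.B p, i ≠ j → G.d p < (G.B p).card →
      f G i - f (dropPlayer G j) i = f G j - f (dropPlayer G i) j) ∧
  (∀ G, IsGD G → G.v = (fun _ => 0) → ∀ k ∈ G.N, f G k = 0)

/-- The extended game `(N ∪ {l}, (v)₊ₗ, 𝓑₊ₗ, d)` obtained by adding an
outside player `l` to the component `B k`. -/
def addPlayer (G : DivGame) (k : Fin G.m) (l : ℕ) : DivGame :=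
  { m := G.m
    N := insert l G.N
    v := fun S => G.v (S.erase l)
    B := fun k' => if k' = k then insert l (G.B k) else G.B k'
    d := G.d }

lemma fact_pred_mul (t : ℕ) (ht : 1 ≤ t) :
    (t : ℝ) * ((t - 1).factorial : ℝ) = (t.factorial : ℝ) := by
  exact_mod_cast congrArg (Nat.cast (R := ℝ)) (Nat.mul_factorial_pred (by omega))

lemma coeff_top (t : ℕ) (ht : 1 ≤ t) :
    (t : ℝ) * (((t-1).factorial * (t-(t-1)-1).factorial : ℝ) / t.factorial) = 1 := by
  have e : t - (t-1) - 1 = 0 := by omega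
  rw [e]
  have hf : (t.factorial : ℝ) ≠ 0 := Nat.cast_ne_zero.mpr (Nat.factorial_ne_zero t)
  rw [Nat.factorial_zero]
  push_cast
  rw [mul_one, mul_div_assoc', fact_pred_mul t ht, div_self hf]

lemma coeff_bot (t : ℕ) (ht : 1 ≤ t) :
    (t : ℝ) * (((Nat.factorial 0) * (t-0-1).factorial : ℝ) / t.factorial) = 1 := by
  have hf : (t.factorial : ℝ) ≠ 0 := Nat.cast_ne_zero.mpr (Nat.factorial_ne_zero t)
  rw [Nat.factorial_zero]
  push_cast
  rw [one_mul, Nat.sub_zero, mul_div_assoc', fact_pred_mul t ht, div_self hf]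

lemma coeff_mid (t a : ℕ) (h1 : 1 ≤ a) (h2 : a < t) :
    (a : ℝ) * (((a-1).factorial * (t-(a-1)-1).factorial : ℝ) / t.factorial)
      = ((t-a : ℕ) : ℝ) * ((a.factorial * (t-a-1).factorial : ℝ) / t.factorial) := by
  have e : a * ((a-1).factorial * (t-(a-1)-1).factorial)
      = (t-a) * (a.factorial * (t-a-1).factorial) := by
    have h3 : t - (a-1) - 1 = t - a := by omega
    have n1 : a * (a-1).factorial = a.factorial := Nat.mul_factorial_pred (by omega)
    have n2 : (t-a) * ((t-a)-1).factorial = (t-a).factorial := Nat.mul_factorial_pred (by omega)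
    rw [h3, ← mul_assoc, n1, ← n2]; ring
  rw [mul_div_assoc', mul_div_assoc']
  congr 1
  exact_mod_cast congrArg (Nat.cast (R := ℝ)) e

lemma shapley_eff (T : Finset ℕ) (u : Finset ℕ → ℝ) (hT : T.Nonempty) :
    ∑ i ∈ T, ∑ S ∈ (T.erase i).powerset,
      ((S.card.factorial * (T.card - S.card - 1).factorial : ℝ) / T.card.factorial) *
        (u (insert i S) - u S) = u T - u ∅ := by
  have ht1 : 1 ≤ T.card := Finset.card_pos.mpr hT
  set c : ℕ → ℝ := fun s => (s.factorial * (T.card - s - 1).factorial : ℝ) / T.card.factorial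
    with hc
  set h : ℕ → Finset ℕ → ℝ := fun i A => (if i ∈ A then c (A.card - 1) else -c A.card) * u A
    with hh
  have claim1 : ∀ i ∈ T, ∑ S ∈ (T.erase i).powerset, c S.card * (u (insert i S) - u S)
      = ∑ A ∈ T.powerset, h i A := by
    intro i hi
    have hiT : T = insert i (T.erase i) := (Finset.insert_erase hi).symm
    rw [hiT, Finset.sum_powerset_insert (Finset.notMem_erase i T), ← Finset.sum_add_distrib]
    rw [← hiT]
    apply Finset.sum_congr rfl
    intro S hS
    have hiS : i ∉ S := fun h' =>
      Finset.notMem_erase i T (Finset.mem_powerset.mp hS h')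
    have h1 : h i S = -c S.card * u S := by simp [hh, hiS]
    have h2 : h i (insert i S) = c S.card * u (insert i S) := by
      simp [hh, Finset.card_insert_of_notMem hiS]
    rw [h1, h2]; ring
  have claim3 : ∀ A ∈ T.powerset, ∑ i ∈ T, h i A
      = (if A = T then u T else 0) + (if A = ∅ then -u ∅ else 0) := by
    intro A hA
    have hAT : A ⊆ T := Finset.mem_powerset.mp hA
    have hcard : A.card ≤ T.card := Finset.card_le_card hAT
    rw [← Finset.sum_sdiff hAT]
    have e1 : ∑ i ∈ A, h i A = (A.card : ℝ) * (c (A.card - 1) * u A) := by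
      rw [Finset.sum_congr rfl (fun i hi => show h i A = c (A.card - 1) * u A by simp [hh, hi]),
        Finset.sum_const, nsmul_eq_mul]
    have e2 : ∑ i ∈ T \ A, h i A = -(((T.card - A.card : ℕ) : ℝ) * (c A.card * u A)) := by
      rw [Finset.sum_congr rfl (fun i hi =>
        show h i A = -(c A.card * u A) by
          have : i ∉ A := (Finset.mem_sdiff.mp hi).2
          simp [hh, this]),
        Finset.sum_const, Finset.card_sdiff_of_subset hAT, nsmul_eq_mul]
      ring
    rw [e1, e2]
    by_cases h0 : A = ∅
    · have hne : A ≠ T := fun h' => by rw [h0] at h'; rw [← h'] at ht1; simp at ht1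
      rw [if_neg hne, if_pos h0]
      have hA0 : A.card = 0 := by rw [h0]; simp
      rw [hA0]
      have hcv : (T.card : ℝ) * c 0 = 1 := coeff_bot T.card ht1
      rw [Nat.sub_zero, ← mul_assoc ((T.card : ℝ)) (c 0), hcv, h0]
      push_cast; ring
    · have ha1 : 1 ≤ A.card := Finset.card_pos.mpr (Finset.nonempty_of_ne_empty h0)
      by_cases hT' : A = T
      · rw [if_pos hT', if_neg h0]
        have hac : A.card = T.card := by rw [hT']
        have hz : ((T.card - A.card : ℕ) : ℝ) = 0 := by rw [hac]; simp
        have hcv : (T.card : ℝ) * c (T.card - 1) = 1 := coeff_top T.card ht1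
        rw [hz, hac, ← mul_assoc ((T.card : ℝ)) (c (T.card - 1)), hcv, hT']
        ring
      · rw [if_neg hT', if_neg h0]
        have halt : A.card < T.card := lt_of_le_of_ne hcard
          (fun h' => hT' (Finset.eq_of_subset_of_card_le hAT (le_of_eq h'.symm)))
        have key : (A.card : ℝ) * c (A.card - 1) = ((T.card - A.card : ℕ) : ℝ) * c A.card :=
          coeff_mid T.card A.card ha1 halt
        rw [← mul_assoc, ← mul_assoc, key]
        ring
  calc ∑ i ∈ T, ∑ S ∈ (T.erase i).powerset,
      ((S.card.factorial * (T.card - S.card - 1).factorial : ℝ) / T.card.factorial) *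
        (u (insert i S) - u S)
      = ∑ i ∈ T, ∑ A ∈ T.powerset, h i A := Finset.sum_congr rfl claim1
    _ = ∑ A ∈ T.powerset, ∑ i ∈ T, h i A := Finset.sum_comm
    _ = ∑ A ∈ T.powerset, ((if A = T then u T else 0) + (if A = ∅ then -u ∅ else 0)) :=
        Finset.sum_congr rfl claim3
    _ = u T - u ∅ := by
        rw [Finset.sum_add_distrib, Finset.sum_ite_eq' T.powerset T (fun _ => u T),
          Finset.sum_ite_eq' T.powerset ∅ (fun _ => -u ∅)]
        simp [Finset.mem_powerset_self]
        ring

lemma gd_disjoint (G : DivGame) (hG : IsGD G) {j r : Fin G.m} (hjr : j ≠ r) :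
    ∀ x, x ∈ G.B j → x ∈ G.B r → False := by
  intro x hxj hxr
  obtain ⟨j0, _, hj0⟩ := hG.2.2.1 x (hG.2.1 j hxj)
  exact hjr ((hj0 j hxj).trans (hj0 r hxr).symm)

lemma gd_nondiverse (G : DivGame) (hG : IsGD G) (r : Fin G.m) (S : Finset ℕ)
    (h : ∀ x, x ∈ S → x ∈ G.B r → False) : restrictedGame G S = 0 := by
  unfold restrictedGame
  rw [if_neg]
  intro hdiv
  have h1 := hdiv r
  have h2 : S ∩ G.B r = ∅ := by
    ext x
    simp only [Finset.mem_inter, Finset.notMem_empty, iff_false, not_and]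
    exact fun hx hbr => h x hx hbr
  rw [h2] at h1
  simp only [Finset.card_empty] at h1
  have := (hG.2.2.2 r).1
  omega

/-- the Diversity Owen value satisfies Equality through diversity. -/
theorem dow_ed : ED DOw := by
  intro G hG k₀ q₀
  suffices h : ∀ k : Fin G.m, ∑ i ∈ G.B k, DOw G i = restrictedGame G G.N / G.m by
    rw [h k₀, h q₀]
  clear k₀ q₀
  intro k
  have hm1 : 1 ≤ G.m := k.pos
  set W : Finset ℕ := ((univ : Finset (Fin G.m)).erase k).biUnion G.B with hW
  have hWBk : ∀ x, x ∈ W → x ∈ G.B k → False := by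
    intro x hx hxk
    obtain ⟨j, hj, hxj⟩ := Finset.mem_biUnion.mp hx
    exact gd_disjoint G hG (Finset.ne_of_mem_erase hj) x hxj hxk
  have hWN : W ∪ G.B k = G.N := by
    ext x
    constructor
    · intro hx
      rcases Finset.mem_union.mp hx with hx | hx
      · obtain ⟨j, _, hxj⟩ := Finset.mem_biUnion.mp hx
        exact hG.2.1 j hxj
      · exact hG.2.1 k hx
    · intro hx
      obtain ⟨j, hj, _⟩ := hG.2.2.1 x hx
      by_cases hjk : j = k
      · exact Finset.mem_union.mpr (Or.inr (hjk ▸ hj))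
      · exact Finset.mem_union.mpr (Or.inl (Finset.mem_biUnion.mpr
          ⟨j, Finset.mem_erase.mpr ⟨hjk, Finset.mem_univ j⟩, hj⟩))
  have hBkne : (G.B k).Nonempty := by
    have h1 := (hG.2.2.2 k).1
    have h2 := (hG.2.2.2 k).2
    exact Finset.card_pos.mp (by omega)
  have hunion : ∀ (i : ℕ) (S : Finset ℕ), W ∪ S ∪ {i} = W ∪ insert i S := by
    intro i S
    ext x
    simp only [Finset.mem_union, Finset.mem_insert, Finset.mem_singleton]
    tauto
  have stepA : ∀ i ∈ G.B k, DOw G i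
      = (1 / (G.m : ℝ)) * ∑ S ∈ ((G.B k).erase i).powerset,
        ((S.card.factorial * ((G.B k).card - S.card - 1).factorial : ℝ) /
          (G.B k).card.factorial) *
          (restrictedGame G (W ∪ insert i S) - restrictedGame G (W ∪ S)) := by
    intro i hi
    have hiN : i ∈ G.N := hG.2.1 k hi
    have hfil : (univ : Finset (Fin G.m)).filter (fun k' => i ∈ G.B k') = {k} := by
      ext k'
      simp only [Finset.mem_filter, Finset.mem_univ, true_and, Finset.mem_singleton]
      constructor
      · intro hik'
        obtain ⟨j, _, hj⟩ := hG.2.2.1 i hiN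
        exact (hj k' hik').trans (hj k hi).symm
      · intro h; subst h; exact hi
    unfold DOw Owen
    rw [hfil, Finset.sum_singleton]
    rw [Finset.sum_eq_single_of_mem ((univ : Finset (Fin G.m)).erase k)
      (Finset.mem_powerset_self _) ?side]
    case side =>
      intro R hR hRne
      apply Finset.sum_eq_zero
      intro S hS
      have hSsub : S ⊆ (G.B k).erase i := Finset.mem_powerset.mp hS
      obtain ⟨r, hr, hrR⟩ := Finset.exists_of_ssubset
        (lt_of_le_of_ne (Finset.mem_powerset.mp hR) hRne)
      have hrk : r ≠ k := (Finset.mem_erase.mp hr).1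
      have hint : ∀ C : Finset ℕ, C = R.biUnion G.B ∪ S ∪ {i} ∨ C = R.biUnion G.B ∪ S →
          restrictedGame G C = 0 := by
        intro C hC
        apply gd_nondiverse G hG r
        intro x hx hxr
        have hx' : x ∈ R.biUnion G.B ∪ S ∪ {i} := by
          rcases hC with h' | h'
          · rwa [h'] at hx
          · rw [h'] at hx
            exact Finset.mem_union.mpr (Or.inl hx)
        rcases Finset.mem_union.mp hx' with h' | h'
        · rcases Finset.mem_union.mp h' with h'' | h''
          · obtain ⟨j, hjR, hxj⟩ := Finset.mem_biUnion.mp h''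
            exact gd_disjoint G hG (fun he : j = r => hrR (by rwa [he] at hjR)) x hxj hxr
          · exact gd_disjoint G hG (Ne.symm hrk) x (Finset.mem_of_mem_erase (hSsub h'')) hxr
        · have hxi : x = i := Finset.mem_singleton.mp h'
          exact gd_disjoint G hG (Ne.symm hrk) x (hxi ▸ hi) hxr
      rw [hint _ (Or.inl rfl), hint _ (Or.inr rfl)]
      simp
    -- the single term R = univ.erase k
    have hcardR : ((univ : Finset (Fin G.m)).erase k).card = G.m - 1 := by
      rw [Finset.card_erase_of_mem (Finset.mem_univ k), Finset.card_univ, Fintype.card_fin]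
    have hmne : (G.m : ℝ) ≠ 0 := Nat.cast_ne_zero.mpr (by omega)
    have hfne : (G.m.factorial : ℝ) ≠ 0 := Nat.cast_ne_zero.mpr (Nat.factorial_ne_zero _)
    have hcoeff : ((((univ : Finset (Fin G.m)).erase k).card.factorial : ℝ) *
        ((G.m - ((univ : Finset (Fin G.m)).erase k).card - 1).factorial : ℝ)) / (G.m.factorial : ℝ)
        = 1 / (G.m : ℝ) := by
      rw [hcardR]
      have h0 : G.m - (G.m - 1) - 1 = 0 := by omega
      rw [h0, Nat.factorial_zero, Nat.cast_one, mul_one, div_eq_div_iff hfne hmne]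
      have hf := fact_pred_mul G.m hm1
      linarith [hf]
    rw [Finset.mul_sum]
    apply Finset.sum_congr rfl
    intro S hS
    rw [hcoeff, hunion i S]
    ring
  have key : ∑ i ∈ G.B k, ∑ S ∈ ((G.B k).erase i).powerset,
      ((S.card.factorial * ((G.B k).card - S.card - 1).factorial : ℝ) /
        (G.B k).card.factorial) *
        (restrictedGame G (W ∪ insert i S) - restrictedGame G (W ∪ S))
      = restrictedGame G (W ∪ G.B k) - restrictedGame G (W ∪ ∅) :=
    shapley_eff (G.B k) (fun A => restrictedGame G (W ∪ A)) hBkne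
  rw [Finset.sum_congr rfl stepA, ← Finset.mul_sum, key, hWN, Finset.union_empty,
    gd_nondiverse G hG k W hWBk]
  ring
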